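/- Let U, V, W, Z be i.i.d. random variables each uniform on [0.1, 0.9], mutually independent. Define B = |U - V| · |Z - W| / (2(Z + W)) and T = ((Z+W)/2) · ((2 - Z - W)/2). Then Cov(B, T) > 0. -/

import Mathlib

/-!
Since `(U, V)` is independent of `(Z, W)` and `B = |U - V| * f (Z, W)`, `T = g (Z, W)` with
`f = propensityBias` and `g = treatmentVar`, the covariance factors as
`Cov(B, T) = E|U - V| * (E[f g] - E[f] E[g])`. One computes exactly `E|U - V| = 4/15`,
`E[g] = 67/300` and `E[f g] = E[|Z - W| (2 - Z - W)] / 8 = 1/30`, so it remains to show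
`E[f] < 10/67` (numerically `E[f] ≈ 0.1441`). This follows from the polynomial majorant
`q = recipMajorant` of `s ↦ 1/s` on `[1/5, ∞)`, for which `E[|Z - W| q(Z + W)] / 2 = 2477/16800`.

All these expectations are exact because over a square `[a, b]²` the integral of
`|z - w| h (z + w)` is the third central difference `F (2b) - F (2a) - 2 (b - a) F' (a + b)` of
any `F` with `F''' = h`, and that of `h (z + w)` is the second difference
`G (2b) - 2 G (a + b) + G (2a)` with `G'' = h`.
-/

open MeasureTheory ProbabilityTheory

noncomputable def unifIcc : Measure ℝ :=
  (ENNReal.ofReal 0.8)⁻¹ • (volume.restrict (Set.Icc (0.1:ℝ) 0.9))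

open Set intervalIntegral

local notation "unif²" => unifIcc.prod unifIcc

section CentralDifference

variable {f f₁ f₂ f₃ : ℝ → ℝ}

theorem integral_integral_comp_add (hf₂ : ∀ x, HasDerivAt f₂ (f₁ x) x)
    (hf₁ : ∀ x, HasDerivAt f₁ (f x) x) (hf : Continuous f) (a b : ℝ) :
    ∫ z in a..b, ∫ w in a..b, f (z + w) = f₂ (2 * b) - 2 * f₂ (a + b) + f₂ (2 * a) := by
  have hf₁c : Continuous f₁ := Differentiable.continuous fun x => (hf₁ x).differentiableAt
  have inner (z : ℝ) : ∫ w in a..b, f (z + w) = f₁ (z + b) - f₁ (z + a) := by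
    rw [integral_comp_add_left,
      integral_eq_sub_of_hasDerivAt (fun x _ => hf₁ x) (hf.intervalIntegrable _ _)]
  simp_rw [inner]
  rw [intervalIntegral.integral_sub
      ((by fun_prop : Continuous fun z => f₁ (z + b)).intervalIntegrable _ _)
      ((by fun_prop : Continuous fun z => f₁ (z + a)).intervalIntegrable _ _),
    integral_comp_add_right, integral_comp_add_right,
    integral_eq_sub_of_hasDerivAt (fun x _ => hf₂ x) (hf₁c.intervalIntegrable _ _),
    integral_eq_sub_of_hasDerivAt (fun x _ => hf₂ x) (hf₁c.intervalIntegrable _ _),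
    two_mul b, two_mul a, add_comm b a]
  ring

theorem integral_abs_sub_mul_comp_add (hf₂ : ∀ x, HasDerivAt f₂ (f₁ x) x)
    (hf₁ : ∀ x, HasDerivAt f₁ (f x) x) (hf : Continuous f) {a b z : ℝ} (hz : z ∈ Icc a b) :
    ∫ w in a..b, |z - w| * f (z + w) =
      2 * f₂ (2 * z) - ((z - a) * f₁ (z + a) + f₂ (z + a))
        - ((z - b) * f₁ (z + b) + f₂ (z + b)) := by
  -- `G` is an antiderivative of `w ↦ (z - w) * f (z + w)` on both sides of `w = z`
  set G : ℝ → ℝ := fun w => (z - w) * f₁ (z + w) + f₂ (z + w)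
  have hG (w : ℝ) : HasDerivAt G ((z - w) * f (z + w)) w := by
    refine ((((hasDerivAt_id' w).const_sub z).mul ((hf₁ (z + w)).comp_const_add z w)).add
      ((hf₂ (z + w)).comp_const_add z w)).congr_deriv ?_
    ring
  have hcont : Continuous fun w => (z - w) * f (z + w) := by fun_prop
  have left : ∫ w in a..z, |z - w| * f (z + w) = G z - G a := by
    rw [← integral_eq_sub_of_hasDerivAt (fun w _ => hG w) (hcont.intervalIntegrable _ _)]
    refine integral_congr fun w hw => ?_
    rw [uIcc_of_le hz.1] at hw
    simp only [abs_of_nonneg (sub_nonneg.2 hw.2)]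
  have right : ∫ w in z..b, |z - w| * f (z + w) = -(G b - G z) := by
    rw [← integral_eq_sub_of_hasDerivAt (fun w _ => hG w) (hcont.intervalIntegrable _ _),
      ← intervalIntegral.integral_neg]
    refine integral_congr fun w hw => ?_
    rw [uIcc_of_le hz.2] at hw
    simp only [abs_of_nonpos (sub_nonpos.2 hw.1), neg_mul]
  have hcont' : Continuous fun w => |z - w| * f (z + w) := by fun_prop
  rw [← integral_add_adjacent_intervals (b := z) (hcont'.intervalIntegrable _ _)
    (hcont'.intervalIntegrable _ _), left, right]
  simp only [G, sub_self, zero_mul, zero_add, two_mul]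
  ring

theorem integral_integral_abs_sub_mul_comp_add (hf₃ : ∀ x, HasDerivAt f₃ (f₂ x) x)
    (hf₂ : ∀ x, HasDerivAt f₂ (f₁ x) x) (hf₁ : ∀ x, HasDerivAt f₁ (f x) x) (hf : Continuous f)
    {a b : ℝ} (hab : a ≤ b) :
    ∫ z in a..b, ∫ w in a..b, |z - w| * f (z + w) =
      f₃ (2 * b) - f₃ (2 * a) - 2 * (b - a) * f₂ (a + b) := by
  have hf₁c : Continuous f₁ := Differentiable.continuous fun x => (hf₁ x).differentiableAt
  have hf₂c : Continuous f₂ := Differentiable.continuous fun x => (hf₂ x).differentiableAt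
  set Φ : ℝ → ℝ := fun z => f₃ (2 * z) - (z - a) * f₂ (z + a) - (z - b) * f₂ (z + b)
  have hΦ (z : ℝ) : HasDerivAt Φ (2 * f₂ (2 * z) - ((z - a) * f₁ (z + a) + f₂ (z + a))
      - ((z - b) * f₁ (z + b) + f₂ (z + b))) z := by
    refine ((((hf₃ (2 * z)).comp z ((hasDerivAt_id' z).const_mul 2)).sub
      (((hasDerivAt_id' z).sub_const a).mul ((hf₂ (z + a)).comp_add_const z a))).sub
      (((hasDerivAt_id' z).sub_const b).mul ((hf₂ (z + b)).comp_add_const z b))).congr_deriv ?_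
    ring
  rw [integral_congr fun z hz => integral_abs_sub_mul_comp_add hf₂ hf₁ hf
      (uIcc_of_le hab ▸ hz),
    integral_eq_sub_of_hasDerivAt (fun z _ => hΦ z)
      ((by fun_prop : Continuous _).intervalIntegrable _ _)]
  simp only [Φ, sub_self, zero_mul, sub_zero, add_comm b a]
  ring

end CentralDifference

section Uniform

open Polynomial

instance : IsProbabilityMeasure unifIcc := ⟨by
  rw [unifIcc, Measure.smul_apply, Measure.restrict_apply_univ, Real.volume_Icc, smul_eq_mul,
    show (0.9 : ℝ) - 0.1 = 0.8 by norm_num]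
  exact ENNReal.inv_mul_cancel (ENNReal.ofReal_pos.2 (by norm_num)).ne' ENNReal.ofReal_ne_top⟩

theorem integral_unifIcc (g : ℝ → ℝ) : ∫ x, g x ∂unifIcc = 5 / 4 * ∫ x in (0.1 : ℝ)..0.9, g x := by
  rw [unifIcc, MeasureTheory.integral_smul_measure, integral_Icc_eq_integral_Ioc,
    ← intervalIntegral.integral_of_le (by norm_num)]
  norm_num [ENNReal.toReal_inv]

theorem ae_mem_unifIcc_prod :
    ∀ᵐ x ∂unif², x.1 ∈ Icc (0.1 : ℝ) 0.9 ∧ x.2 ∈ Icc (0.1 : ℝ) 0.9 := by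
  have h : ∀ᵐ x ∂unifIcc, x ∈ Icc (0.1 : ℝ) 0.9 :=
    Measure.ae_smul_measure (ae_restrict_mem measurableSet_Icc) _
  exact (Measure.quasiMeasurePreserving_fst.ae h).and (Measure.quasiMeasurePreserving_snd.ae h)

theorem integrable_unifIcc_prod_of_continuous {F : ℝ × ℝ → ℝ} (hF : Continuous F) :
    Integrable F unif² := by
  obtain ⟨C, hC⟩ := (isCompact_Icc.prod isCompact_Icc).exists_bound_of_continuousOn hF.continuousOn
  exact .of_bound hF.aestronglyMeasurable C (ae_mem_unifIcc_prod.mono fun x hx => hC x hx)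

theorem integral_unifIcc_prod {F : ℝ × ℝ → ℝ} (hF : Integrable F unif²) :
    ∫ x, F x ∂unif² = 25 / 16 * ∫ z in (0.1 : ℝ)..0.9, ∫ w in (0.1 : ℝ)..0.9, F (z, w) := by
  rw [integral_prod _ hF, integral_unifIcc]
  simp_rw [integral_unifIcc, intervalIntegral.integral_const_mul]
  ring

theorem integral_eval_add_unifIcc_prod (p : ℝ[X]) :
    ∫ x, (derivative (derivative p)).eval (x.1 + x.2) ∂unif² =
      25 / 16 * (p.eval (9 / 5) - 2 * p.eval 1 + p.eval (1 / 5)) := by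
  rw [integral_unifIcc_prod (integrable_unifIcc_prod_of_continuous (by fun_prop)),
    integral_integral_comp_add (fun x => p.hasDerivAt x) (fun x => p.derivative.hasDerivAt x)
      (by fun_prop)]
  norm_num

theorem integral_abs_sub_mul_eval_add_unifIcc_prod (p : ℝ[X]) :
    ∫ x, |x.1 - x.2| * (derivative (derivative (derivative p))).eval (x.1 + x.2) ∂unif² =
      25 / 16 * (p.eval (9 / 5) - p.eval (1 / 5) - 8 / 5 * (derivative p).eval 1) := by
  rw [integral_unifIcc_prod (integrable_unifIcc_prod_of_continuous (by fun_prop)),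
    integral_integral_abs_sub_mul_comp_add (fun x => p.hasDerivAt x)
      (fun x => p.derivative.hasDerivAt x) (fun x => p.derivative.derivative.hasDerivAt x)
      (by fun_prop) (by norm_num)]
  norm_num

theorem integral_abs_sub_unifIcc_prod : ∫ x, |x.1 - x.2| ∂unif² = 4 / 15 := by
  have h := integral_abs_sub_mul_eval_add_unifIcc_prod (C (1 / 6) * X ^ 3)
  norm_num at h
  exact h

noncomputable def propensityBias (x : ℝ × ℝ) : ℝ := |x.1 - x.2| / (2 * (x.1 + x.2))

noncomputable def treatmentVar (x : ℝ × ℝ) : ℝ := (x.1 + x.2) / 2 * ((2 - x.1 - x.2) / 2)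

theorem measurable_propensityBias : Measurable propensityBias := by
  unfold propensityBias
  fun_prop

theorem measurable_treatmentVar : Measurable treatmentVar := by
  unfold treatmentVar
  fun_prop

-- `s * recipMajorant s - 1 = (5s - 1)(5s - 4)²(3s - 4)²/256`: `recipMajorant` touches `1/s` at
-- `4/5` and `4/3`, which keeps it close to `1/s` where the weight `|z - w|` has its mass.
noncomputable def recipMajorant (s : ℝ) : ℝ :=
  9 - 207 / 8 * s + 265 / 8 * s ^ 2 - 5025 / 256 * s ^ 3 + 1125 / 256 * s ^ 4

theorem integral_treatmentVar_unifIcc_prod : ∫ x, treatmentVar x ∂unif² = 67 / 300 := by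
  have h := integral_eval_add_unifIcc_prod (C (1 / 12) * X ^ 3 - C (1 / 48) * X ^ 4)
  norm_num at h
  rw [← h]
  congr 1 with x
  simp only [treatmentVar]
  ring

theorem integral_abs_sub_mul_two_sub_unifIcc_prod :
    ∫ x, |x.1 - x.2| * (2 - x.1 - x.2) / 8 ∂unif² = 1 / 30 := by
  have h := integral_abs_sub_mul_eval_add_unifIcc_prod (C (1 / 24) * X ^ 3 - C (1 / 192) * X ^ 4)
  norm_num at h
  rw [← h]
  congr 1 with x
  ring

theorem integral_abs_sub_mul_recipMajorant_unifIcc_prod :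
    ∫ x, |x.1 - x.2| * recipMajorant (x.1 + x.2) / 2 ∂unif² = 2477 / 16800 := by
  have h := integral_abs_sub_mul_eval_add_unifIcc_prod (C (3 / 4) * X ^ 3 - C (69 / 128) * X ^ 4
    + C (53 / 192) * X ^ 5 - C (335 / 4096) * X ^ 6 + C (75 / 7168) * X ^ 7)
  norm_num at h
  rw [← h]
  congr 1 with x
  simp only [recipMajorant]
  ring

theorem inv_le_recipMajorant {s : ℝ} (hs : 1 / 5 ≤ s) : s⁻¹ ≤ recipMajorant s := by
  rw [inv_le_iff_one_le_mul₀' (by linarith)]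
  have key : s * recipMajorant s = 1 + (5 * s - 1) * ((5 * s - 4) * (3 * s - 4)) ^ 2 / 256 := by
    simp only [recipMajorant]
    ring
  have := mul_nonneg (by linarith : (0 : ℝ) ≤ 5 * s - 1) (sq_nonneg ((5 * s - 4) * (3 * s - 4)))
  rw [key]
  linarith

theorem integral_propensityBias_lt : ∫ x, propensityBias x ∂unif² < 10 / 67 := by
  have hmaj : Integrable (fun x : ℝ × ℝ => |x.1 - x.2| * recipMajorant (x.1 + x.2) / 2) unif² :=
    integrable_unifIcc_prod_of_continuous (by simp only [recipMajorant]; fun_prop)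
  have hbound : ∀ᵐ x ∂unif², ‖propensityBias x‖ ≤ |x.1 - x.2| * recipMajorant (x.1 + x.2) / 2 := by
    filter_upwards [ae_mem_unifIcc_prod] with x hx
    have hs : 1 / 5 ≤ x.1 + x.2 := by linarith [hx.1.1, hx.2.1]
    rw [Real.norm_of_nonneg (by unfold propensityBias; positivity),
      show propensityBias x = |x.1 - x.2| * (x.1 + x.2)⁻¹ / 2 by unfold propensityBias; field_simp]
    gcongr
    exact inv_le_recipMajorant hs
  have hint : Integrable propensityBias unif² :=
    hmaj.mono' measurable_propensityBias.aestronglyMeasurable hbound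
  calc ∫ x, propensityBias x ∂unif²
      ≤ ∫ x, |x.1 - x.2| * recipMajorant (x.1 + x.2) / 2 ∂unif² :=
        integral_mono_ae hint hmaj (hbound.mono fun x hx => (le_abs_self _).trans hx)
    _ = 2477 / 16800 := integral_abs_sub_mul_recipMajorant_unifIcc_prod
    _ < 10 / 67 := by norm_num

theorem integral_propensityBias_mul_treatmentVar :
    ∫ x, propensityBias x * treatmentVar x ∂unif² = 1 / 30 := by
  rw [← integral_abs_sub_mul_two_sub_unifIcc_prod]
  refine integral_congr_ae (ae_mem_unifIcc_prod.mono fun x hx => ?_)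
  have hs : 0 < x.1 + x.2 := by linarith [hx.1.1, hx.2.1]
  simp only [propensityBias, treatmentVar]
  field_simp
  ring

end Uniform

section Independence

variable {Ω β : Type*} [MeasurableSpace Ω] [MeasurableSpace β] {μ : Measure Ω}

theorem integral_comp_of_map_eq {ν : Measure β} {Y : Ω → β} (hY : AEMeasurable Y μ)
    (hmap : μ.map Y = ν) {F : β → ℝ} (hF : AEStronglyMeasurable F ν) :
    ∫ ω, F (Y ω) ∂μ = ∫ y, F y ∂ν := by
  subst hmap
  exact (integral_map hY hF).symm

theorem integral_mul_comp_mul_comp_sub_of_indepFun {X : Ω → ℝ} {Y : Ω → β} (hXY : IndepFun X Y μ)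
    (hX : AEStronglyMeasurable X μ) (hY : AEMeasurable Y μ) {f g : β → ℝ} (hf : Measurable f)
    (hg : Measurable g) :
    ∫ ω, X ω * f (Y ω) * g (Y ω) ∂μ - (∫ ω, X ω * f (Y ω) ∂μ) * ∫ ω, g (Y ω) ∂μ =
      (∫ ω, X ω ∂μ) * (∫ ω, f (Y ω) * g (Y ω) ∂μ - (∫ ω, f (Y ω) ∂μ) * ∫ ω, g (Y ω) ∂μ) := by
  have hfg := (hXY.comp measurable_id (hf.mul hg)).integral_mul_eq_mul_integral hX
    ((hf.mul hg).comp_aemeasurable hY).aestronglyMeasurable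
  have hf' := (hXY.comp measurable_id hf).integral_mul_eq_mul_integral hX
    (hf.comp_aemeasurable hY).aestronglyMeasurable
  simp only [Pi.mul_apply, Function.comp_apply, id] at hfg hf'
  simp only [mul_assoc, hfg, hf']
  ring

end Independence

/-- Confounding-bias covariance signal ρ̄(b₁, A) > 0: for U, V, Z, W i.i.d.
uniform on [0.1, 0.9], the covariance between the bias magnitude
B = |U-V|·|Z-W|/(2(Z+W)) and the treatment variance T = ((Z+W)/2)((2-Z-W)/2)
is strictly positive. -/
theorem stmt_8 {Ω : Type*} [MeasurableSpace Ω] (μ : Measure Ω)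
    [IsProbabilityMeasure μ] (U V Z W : Ω → ℝ)
    (hU : Measurable U) (hV : Measurable V) (hZ : Measurable Z)
    (hW : Measurable W)
    (hindep : iIndepFun ![U, V, Z, W] μ)
    (hUd : Measure.map U μ = unifIcc) (hVd : Measure.map V μ = unifIcc)
    (hZd : Measure.map Z μ = unifIcc) (hWd : Measure.map W μ = unifIcc) :
    (∫ ω, (|U ω - V ω| * |Z ω - W ω| / (2 * (Z ω + W ω)))
        * ((Z ω + W ω) / 2 * ((2 - Z ω - W ω) / 2)) ∂μ)
      - (∫ ω, |U ω - V ω| * |Z ω - W ω| / (2 * (Z ω + W ω)) ∂μ)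
        * (∫ ω, (Z ω + W ω) / 2 * ((2 - Z ω - W ω) / 2) ∂μ) > 0 := by
  have hmeas : ∀ i, Measurable (![U, V, Z, W] i) := fun i => by fin_cases i <;> assumption
  have hUV : μ.map (fun ω => (U ω, V ω)) = unif² := by
    rw [(indepFun_iff_map_prod_eq_prod_map_map hU.aemeasurable hV.aemeasurable).1
      (by simpa using hindep.indepFun (i := 0) (j := 1) (by decide)), hUd, hVd]
  have hZW : μ.map (fun ω => (Z ω, W ω)) = unif² := by
    rw [(indepFun_iff_map_prod_eq_prod_map_map hZ.aemeasurable hW.aemeasurable).1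
      (by simpa using hindep.indepFun (i := 2) (j := 3) (by decide)), hZd, hWd]
  have hUV_ZW : IndepFun (fun ω => (U ω, V ω)) (fun ω => (Z ω, W ω)) μ := by
    simpa using hindep.indepFun_prodMk_prodMk hmeas 0 1 2 3 (by decide) (by decide) (by decide)
      (by decide)
  have lawUV : ∫ ω, |U ω - V ω| ∂μ = ∫ x, |x.1 - x.2| ∂unif² :=
    integral_comp_of_map_eq (F := fun x => |x.1 - x.2|) (by fun_prop) hUV
      (by fun_prop : Measurable _).aestronglyMeasurable
  have lawZW (F : ℝ × ℝ → ℝ) (hF : Measurable F) :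
      ∫ ω, F (Z ω, W ω) ∂μ = ∫ x, F x ∂unif² :=
    integral_comp_of_map_eq (by fun_prop) hZW hF.aestronglyMeasurable
  calc _ = (∫ ω, |U ω - V ω| ∂μ) * (∫ ω, propensityBias (Z ω, W ω) * treatmentVar (Z ω, W ω) ∂μ
        - (∫ ω, propensityBias (Z ω, W ω) ∂μ) * ∫ ω, treatmentVar (Z ω, W ω) ∂μ) := by
        simp only [mul_div_assoc]
        exact integral_mul_comp_mul_comp_sub_of_indepFun
          (hUV_ZW.comp (by fun_prop : Measurable fun x : ℝ × ℝ => |x.1 - x.2|) measurable_id)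
          (by fun_prop) (by fun_prop) measurable_propensityBias measurable_treatmentVar
    _ = 4 / 15 * (1 / 30 - (∫ x, propensityBias x ∂unif²) * (67 / 300)) := by
        rw [lawUV, lawZW (fun x => propensityBias x * treatmentVar x)
            (measurable_propensityBias.mul measurable_treatmentVar),
          lawZW _ measurable_propensityBias, lawZW _ measurable_treatmentVar,
          integral_abs_sub_unifIcc_prod, integral_propensityBias_mul_treatmentVar,
          integral_treatmentVar_unifIcc_prod]
    _ > 0 := by nlinarith [integral_propensityBias_lt]
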